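/- arXiv:2505.16803 — 2 statements merged into one kernel-verified Lean document; each statement's English description precedes it below -/
import Mathlib

section
/- Let V₁ = [[1, i v₃],[0,1]], V₂ = [[1,0],[i v₁,1]], V₃ = [[1, i v₄],[0,1]], V₄ = [[1,0],[i v₂,1]], V₅ = [[1, i v₀],[0,1]] be 2×2 complex matrices. Then the matrix equation V₁V₂V₃V₄V₅ = [[0,i],[i,0]] holds if and only if v_k = 1 - v_{k-1} v_{k+1} for all k ∈ ℤ/5ℤ. -/
open Complex

/-- The no-monodromy condition `V₁V₂V₃V₄V₅ = [[0,i],[i,0]]` on the Stokes matrices of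
the Painlevé I linear system is equivalent to the cyclic scalar relations
`v_k = 1 - v_{k-1} v_{k+1}` for all `k ∈ ℤ/5ℤ`. -/
theorem stokes_matrix_relation (v : ZMod 5 → ℂ) :
    ((!![1, I * v 3; 0, 1] : Matrix (Fin 2) (Fin 2) ℂ) *
        !![1, 0; I * v 1, 1] * !![1, I * v 4; 0, 1] *
        !![1, 0; I * v 2, 1] * !![1, I * v 0; 0, 1]
      = !![0, I; I, 0])
    ↔ (∀ k : ZMod 5, v k = 1 - v (k - 1) * v (k + 1)) := by
  have hI : (I : ℂ)^2 = -1 := Complex.I_sq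
  set a := v 3; set b := v 1; set c := v 4; set d := v 2; set e := v 0
  constructor
  · intro h
    have h00 := Matrix.ext_iff.mpr h 0 0
    have h01 := Matrix.ext_iff.mpr h 0 1
    have h10 := Matrix.ext_iff.mpr h 1 0
    have h11 := Matrix.ext_iff.mpr h 1 1
    simp [Matrix.mul_apply, Fin.sum_univ_two] at h00 h01 h10 h11
    have H1 : 1 - a*b - a*d - c*d + a*b*c*d = 0 := by
      linear_combination h00 - ((a*b+a*d+c*d) + (I^2-1)*(a*b*c*d)) * hI
    have H3 : b + d - b*c*d = 1 := by
      apply mul_left_cancel₀ I_ne_zero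
      linear_combination h10 - (I*b*c*d)*hI
    have H4 : 1 - b*c - b*e - d*e + b*c*d*e = 0 := by
      linear_combination h11 - ((b*c+b*e+d*e) + (I^2-1)*(b*c*d*e)) * hI
    have H2 : a + c + e - a*b*c - a*b*e - a*d*e - c*d*e + a*b*c*d*e = 1 := by
      apply mul_left_cancel₀ I_ne_zero
      linear_combination h01 - (I*(a*b*c+a*b*e+a*d*e+c*d*e) + I*(I^2-1)*(a*b*c*d*e))*hI
    intro k
    fin_cases k
    · show e = 1 - c * b
      linear_combination -H4 - e*H3
    · show b = 1 - e * d
      linear_combination (1-d*e)*H3 - d*H4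
    · show d = 1 - b * a
      linear_combination (d*e-1)*H1 - d*H2
    · show a = 1 - d * c
      linear_combination (c*d*e - c - e)*H1 + (1-c*d)*H2
    · show c = 1 - a * e
      linear_combination H2 - e*H1 - a*H4 - a*e*H3
  · intro h
    have ha := h 3; have hb := h 1; have hc := h 4; have hd := h 2; have he := h 0
    rw [show (3:ZMod 5)-1 = 2 from rfl, show (3:ZMod 5)+1 = 4 from rfl] at ha
    rw [show (1:ZMod 5)-1 = 0 from rfl, show (1:ZMod 5)+1 = 2 from rfl] at hb
    rw [show (4:ZMod 5)-1 = 3 from rfl, show (4:ZMod 5)+1 = 0 from rfl] at hc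
    rw [show (2:ZMod 5)-1 = 1 from rfl, show (2:ZMod 5)+1 = 3 from rfl] at hd
    rw [show (0:ZMod 5)-1 = 4 from rfl, show (0:ZMod 5)+1 = 1 from rfl] at he
    ext i j
    fin_cases i <;> fin_cases j <;> simp [Matrix.mul_apply, Fin.sum_univ_two]
    · linear_combination (-d)*ha + (c*d-1)*hd + ((a*b+a*d+c*d)+(I^2-1)*(a*b*c*d))*hI
    · linear_combination I*((1-d*e)*ha + (c*d*e-e-c)*hd) +
        (I*(a*b*c+a*b*e+a*d*e+c*d*e) + I*(I^2-1)*(a*b*c*d*e))*hI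
    · linear_combination I*hb - I*d*he + (I*b*c*d)*hI
    · linear_combination (-e)*hb + (d*e-1)*he + ((b*c+b*e+d*e)+(I^2-1)*(b*c*d*e))*hI
end

section
/- For each natural number s ≥ 1, define operators on functions of variables c_{1/2}, c_{3/2}, …, c_{s-1/2} by: L_n ↦ 0 for n ≥ 2s; L_n ↦ -Σ_{k=n-s+1/2}^{s-1/2} c_k c_{n-k} (multiplication operator) for s ≤ n ≤ 2s-1; and L_n ↦ -Σ_{k=1/2}^{s-1/2} c_k c_{n-k} + Σ_{k=1/2}^{s-n-1/2} k c_{n+k} ∂/∂c_k for 0 ≤ n ≤ s-1 (where c_j = 0 if the index j is out of range). Then these operators satisfy [L_m^{(s-1/2)}, L_n^{(s-1/2)}] = (n - m) L_{m+n}^{(s-1/2)} for all m, n ≥ 0, i.e., they realize an anti-homomorphism of the positive part of the Witt/Virasoro algebra. -/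
open MvPolynomial

/-- The variable `c_{j+1/2}` of the half-integer realization, extended by `0`
when the index is out of range. -/
noncomputable def halfVar (s : ℕ) (j : ℕ) : MvPolynomial (Fin s) ℂ :=
  if h : j < s then X ⟨j, h⟩ else 0

/-- The partial derivative `∂/∂c_{j+1/2}`, extended by `0` when the index is out of
range. -/
noncomputable def halfPd (s : ℕ) (j : ℕ) (f : MvPolynomial (Fin s) ℂ) :
    MvPolynomial (Fin s) ℂ :=
  if h : j < s then pderiv ⟨j, h⟩ f else 0

/-- The realization `𝓛ₙ^{(s-1/2)}` of `Lₙ` (`n ≥ 0`) as first order differential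
operators in the variables `c_{1/2}, …, c_{s-1/2}` (the variable `c_{j+1/2}`
corresponds to the polynomial variable with index `j`):
* for `s ≤ n` (which includes `n ≥ 2s`, where the sum is empty and the operator
  vanishes): multiplication by `-Σ_{k=n-s+1/2}^{s-1/2} c_k c_{n-k}`;
* for `0 ≤ n < s`: multiplication by `-Σ_{k=1/2}^{s-1/2} c_k c_{n-k}` (with
  `c_j = 0` out of range) plus `Σ_{k=1/2}^{s-n-1/2} k c_{n+k} ∂/∂c_k`. -/
noncomputable def halfVir (s n : ℕ) (f : MvPolynomial (Fin s) ℂ) :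
    MvPolynomial (Fin s) ℂ :=
  if n < s then
    (-(∑ j ∈ Finset.range n, halfVar s j * halfVar s (n - 1 - j))) * f
      + ∑ j ∈ Finset.range (s - n),
          ((j : ℂ) + 1/2) • (halfVar s (n + j) * halfPd s j f)
  else
    (-(∑ j ∈ Finset.Icc (n - s) (s - 1), halfVar s j * halfVar s (n - 1 - j))) * f

/-! ### Auxiliary machinery -/

noncomputable def Dop (s m : ℕ) (f : MvPolynomial (Fin s) ℂ) : MvPolynomial (Fin s) ℂ :=
  ∑ j ∈ Finset.range (s - m), ((j : ℂ) + 1/2) • (halfVar s (m + j) * halfPd s j f)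

noncomputable def apoly (s n : ℕ) : MvPolynomial (Fin s) ℂ :=
  -(∑ j ∈ Finset.range n, halfVar s j * halfVar s (n - 1 - j))

lemma halfVar_eq_zero {s j : ℕ} (h : s ≤ j) : halfVar s j = 0 := by
  simp [halfVar, Nat.not_lt.mpr h]

lemma halfPd_halfVar (s j i : ℕ) :
    halfPd s j (halfVar s i) = if i = j ∧ j < s then 1 else 0 := by
  unfold halfPd halfVar
  rcases Nat.lt_or_ge j s with hj | hj
  · rcases Nat.lt_or_ge i s with hi | hi
    · rw [dif_pos hi, dif_pos hj]
      rcases eq_or_ne i j with rfl | hij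
      · rw [pderiv_X_self, if_pos ⟨rfl, hj⟩]
      · rw [pderiv_X_of_ne (Fin.ne_of_val_ne hij), if_neg (by tauto)]
    · rw [dif_pos hj, dif_neg (by omega), map_zero, if_neg (by omega)]
  · rw [dif_neg (by omega), if_neg (by omega)]

lemma halfVir_eq (s : ℕ) (hs : 1 ≤ s) (n : ℕ) (f : MvPolynomial (Fin s) ℂ) :
    halfVir s n f = apoly s n * f + Dop s n f := by
  unfold halfVir apoly Dop
  split
  · rfl
  · rename_i h
    push_neg at h
    rw [Nat.sub_eq_zero_of_le h, Finset.range_zero, Finset.sum_empty, add_zero]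
    congr 2
    refine Finset.sum_subset ?_ ?_
    · intro j hj
      simp only [Finset.mem_Icc] at hj
      simp only [Finset.mem_range]
      omega
    · intro j hj hj'
      simp only [Finset.mem_range] at hj
      simp only [Finset.mem_Icc, not_and_or, not_le] at hj'
      rcases hj' with h1 | h2
      · rw [halfVar_eq_zero (s := s) (j := n - 1 - j) (by omega), mul_zero]
      · rw [halfVar_eq_zero (s := s) (j := j) (by omega), zero_mul]

lemma Dop_halfVar (s m i : ℕ) :
    Dop s m (halfVar s i) = ((i : ℂ) + 1/2) • halfVar s (m + i) := by
  unfold Dop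
  have hc : ∀ j ∈ Finset.range (s - m),
      ((j : ℂ) + 1/2) • (halfVar s (m + j) * halfPd s j (halfVar s i))
        = if i = j then ((i : ℂ) + 1/2) • halfVar s (m + i) else 0 := by
    intro j hj
    simp only [Finset.mem_range] at hj
    rw [halfPd_halfVar]
    rcases eq_or_ne i j with rfl | hij
    · rw [if_pos ⟨rfl, by omega⟩, if_pos rfl, mul_one]
    · rw [if_neg (by tauto), if_neg hij, mul_zero, smul_zero]
  rw [Finset.sum_congr rfl hc, Finset.sum_ite_eq]
  split
  · rfl
  · rename_i h
    simp only [Finset.mem_range] at h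
    rw [halfVar_eq_zero (by omega), smul_zero]

lemma halfPd_mul (s j : ℕ) (f g : MvPolynomial (Fin s) ℂ) :
    halfPd s j (f * g) = halfPd s j f * g + f * halfPd s j g := by
  unfold halfPd; split
  · exact pderiv_mul
  · simp

lemma halfPd_sum {ι : Type*} (s j : ℕ) (t : Finset ι) (F : ι → MvPolynomial (Fin s) ℂ) :
    halfPd s j (∑ i ∈ t, F i) = ∑ i ∈ t, halfPd s j (F i) := by
  unfold halfPd; split <;> simp

lemma Dop_mul (s m : ℕ) (f g : MvPolynomial (Fin s) ℂ) :
    Dop s m (f * g) = Dop s m f * g + f * Dop s m g := by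
  unfold Dop
  rw [Finset.sum_mul, Finset.mul_sum, ← Finset.sum_add_distrib]
  refine Finset.sum_congr rfl fun j _ => ?_
  rw [halfPd_mul]
  simp only [smul_eq_C_mul]
  ring

lemma Dop_add (s m : ℕ) (f g : MvPolynomial (Fin s) ℂ) :
    Dop s m (f + g) = Dop s m f + Dop s m g := by
  unfold Dop
  rw [← Finset.sum_add_distrib]
  refine Finset.sum_congr rfl fun j _ => ?_
  unfold halfPd; split <;> simp [mul_add]

lemma Dop_neg (s m : ℕ) (f : MvPolynomial (Fin s) ℂ) :
    Dop s m (-f) = -Dop s m f := by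
  unfold Dop
  rw [← Finset.sum_neg_distrib]
  refine Finset.sum_congr rfl fun j _ => ?_
  unfold halfPd; split <;> simp

lemma Dop_sum {ι : Type*} (s m : ℕ) (t : Finset ι) (F : ι → MvPolynomial (Fin s) ℂ) :
    Dop s m (∑ i ∈ t, F i) = ∑ i ∈ t, Dop s m (F i) := by
  unfold Dop
  rw [Finset.sum_comm]
  refine Finset.sum_congr rfl fun j _ => ?_
  rw [halfPd_sum, Finset.mul_sum, Finset.smul_sum]

lemma expandA (s m n : ℕ) :
    Dop s m (apoly s n)
      = -∑ k ∈ Finset.range (m + n),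
          ((if k < n then ((n - 1 - k : ℕ) : ℂ) + 1/2 else 0)
            + (if m ≤ k then ((k - m : ℕ) : ℂ) + 1/2 else 0))
            • (halfVar s k * halfVar s (m + n - 1 - k)) := by
  unfold apoly
  rw [Dop_neg, Dop_sum, neg_inj]
  have step : ∀ i ∈ Finset.range n,
      Dop s m (halfVar s i * halfVar s (n - 1 - i))
        = (((i : ℕ) : ℂ) + 1/2) • (halfVar s (m + i) * halfVar s (m + n - 1 - (m + i)))
          + (((n - 1 - i : ℕ) : ℂ) + 1/2) • (halfVar s i * halfVar s (m + n - 1 - i)) := by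
    intro i hi
    simp only [Finset.mem_range] at hi
    rw [Dop_mul, Dop_halfVar, Dop_halfVar]
    have e1 : m + n - 1 - (m + i) = n - 1 - i := by omega
    have e2 : m + (n - 1 - i) = m + n - 1 - i := by omega
    rw [e1, e2, smul_mul_assoc, mul_smul_comm]
  rw [Finset.sum_congr rfl step, Finset.sum_add_distrib]
  have hS1 : ∑ i ∈ Finset.range n,
      (((i : ℕ) : ℂ) + 1/2) • (halfVar s (m + i) * halfVar s (m + n - 1 - (m + i)))
      = ∑ k ∈ Finset.range (m + n),
          (if m ≤ k then ((k - m : ℕ) : ℂ) + 1/2 else 0)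
            • (halfVar s k * halfVar s (m + n - 1 - k)) := by
    have h1 : ∑ k ∈ Finset.Ico m (m + n),
          (if m ≤ k then ((k - m : ℕ) : ℂ) + 1/2 else 0)
            • (halfVar s k * halfVar s (m + n - 1 - k))
        = ∑ k ∈ Finset.range (m + n),
          (if m ≤ k then ((k - m : ℕ) : ℂ) + 1/2 else 0)
            • (halfVar s k * halfVar s (m + n - 1 - k)) := by
      refine Finset.sum_subset ?_ ?_
      · intro k hk
        simp only [Finset.mem_Ico] at hk
        simp only [Finset.mem_range]
        omega
      · intro k hk hk'
        simp only [Finset.mem_range] at hk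
        simp only [Finset.mem_Ico, not_and_or, not_le, not_lt] at hk'
        rw [if_neg (by omega), zero_smul]
    rw [← h1, Finset.sum_Ico_eq_sum_range]
    have h2 : m + n - m = n := by omega
    rw [h2]
    refine Finset.sum_congr rfl fun i hi => ?_
    rw [if_pos (by omega), Nat.add_sub_cancel_left]
  have hS2 : ∑ i ∈ Finset.range n,
      (((n - 1 - i : ℕ) : ℂ) + 1/2) • (halfVar s i * halfVar s (m + n - 1 - i))
      = ∑ k ∈ Finset.range (m + n),
          (if k < n then ((n - 1 - k : ℕ) : ℂ) + 1/2 else 0)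
            • (halfVar s k * halfVar s (m + n - 1 - k)) := by
    have h1 : ∑ k ∈ Finset.range n,
          (if k < n then ((n - 1 - k : ℕ) : ℂ) + 1/2 else 0)
            • (halfVar s k * halfVar s (m + n - 1 - k))
        = ∑ k ∈ Finset.range (m + n),
          (if k < n then ((n - 1 - k : ℕ) : ℂ) + 1/2 else 0)
            • (halfVar s k * halfVar s (m + n - 1 - k)) := by
      refine Finset.sum_subset ?_ ?_
      · intro k hk
        simp only [Finset.mem_range] at *
        omega
      · intro k hk hk'
        simp only [Finset.mem_range] at hk hk'
        rw [if_neg (by omega), zero_smul]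
    rw [← h1]
    refine Finset.sum_congr rfl fun i hi => ?_
    simp only [Finset.mem_range] at hi
    rw [if_pos hi]
  rw [hS1, hS2, ← Finset.sum_add_distrib]
  refine Finset.sum_congr rfl fun k hk => ?_
  rw [← add_smul, add_comm]

lemma keyA (s m n : ℕ) :
    Dop s m (apoly s n) - Dop s n (apoly s m)
      = (((n : ℂ) - m)) • apoly s (m + n) := by
  rw [expandA s m n, expandA s n m, Nat.add_comm n m]
  unfold apoly
  rw [smul_neg, Finset.smul_sum, neg_sub_neg, ← Finset.sum_sub_distrib,
    ← Finset.sum_neg_distrib]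
  refine Finset.sum_congr rfl fun k hk => ?_
  simp only [Finset.mem_range] at hk
  rw [← sub_smul, ← neg_smul]
  congr 1
  have c1 : ∀ a b : ℕ, b < a → ((a - 1 - b : ℕ) : ℂ) = (a : ℂ) - b - 1 := by
    intro a b h
    have e : a - 1 - b = a - (b + 1) := by omega
    rw [e, Nat.cast_sub (by omega)]
    push_cast
    ring
  have c2 : ∀ a b : ℕ, b ≤ a → ((a - b : ℕ) : ℂ) = (a : ℂ) - b := by
    intro a b h
    rw [Nat.cast_sub h]
  have e1 : ∀ a b : ℕ, (if k < a then ((a - 1 - k : ℕ) : ℂ) + 1/2 else 0)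
      + (if b ≤ k then ((k - b : ℕ) : ℂ) + 1/2 else 0)
      = (if k < a then (a : ℂ) - k - 1/2 else 0)
        + (if b ≤ k then (k : ℂ) - b + 1/2 else 0) := by
    intro a b
    congr 1
    · split_ifs with h
      · rw [c1 a k h]; ring
      · rfl
    · split_ifs with h
      · rw [c2 k b h]
      · rfl
  rw [e1, e1]
  split_ifs <;> first | (exfalso; omega) | ring

lemma pderiv_comm' {σ : Type*} (i j : σ) (f : MvPolynomial σ ℂ) :
    pderiv i (pderiv j f) = pderiv j (pderiv i f) := by
  classical
  induction f using MvPolynomial.induction_on with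
  | C a => simp
  | add p q hp hq => simp [hp, hq]
  | mul_X =>
      rename_i p k hp
      rcases eq_or_ne k i with rfl | hik <;> rcases eq_or_ne k j with rfl | hjk <;>
        simp [pderiv_mul, pderiv_X_of_ne, hp, *] <;> ring

lemma halfPd_comm (s i j : ℕ) (f : MvPolynomial (Fin s) ℂ) :
    halfPd s i (halfPd s j f) = halfPd s j (halfPd s i f) := by
  unfold halfPd
  split <;> split <;> simp [pderiv_comm']

lemma halfPd_smul (s j : ℕ) (z : ℂ) (f : MvPolynomial (Fin s) ℂ) :
    halfPd s j (z • f) = z • halfPd s j f := by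
  unfold halfPd; split <;> simp

lemma expandB (s m n : ℕ) (f : MvPolynomial (Fin s) ℂ) :
    Dop s m (Dop s n f)
      = (∑ k ∈ Finset.range (s - (m + n)),
          ((((n + k : ℕ) : ℂ) + 1/2) * (((k : ℕ) : ℂ) + 1/2))
            • (halfVar s (m + n + k) * halfPd s k f))
        + ∑ j ∈ Finset.range (s - m), ∑ k ∈ Finset.range (s - n),
            ((((j : ℕ) : ℂ) + 1/2) * (((k : ℕ) : ℂ) + 1/2))
              • (halfVar s (m + j) * (halfVar s (n + k) * halfPd s j (halfPd s k f))) := by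
  unfold Dop
  have step : ∀ j ∈ Finset.range (s - m),
      (((j : ℕ) : ℂ) + 1/2) • (halfVar s (m + j)
        * halfPd s j (∑ k ∈ Finset.range (s - n),
            (((k : ℕ) : ℂ) + 1/2) • (halfVar s (n + k) * halfPd s k f)))
      = (∑ k ∈ Finset.range (s - n),
          ((((j : ℕ) : ℂ) + 1/2) * (((k : ℕ) : ℂ) + 1/2))
            • ((if n + k = j ∧ j < s then (1 : MvPolynomial (Fin s) ℂ) else 0)
                * (halfVar s (m + j) * halfPd s k f)))
        + ∑ k ∈ Finset.range (s - n),
          ((((j : ℕ) : ℂ) + 1/2) * (((k : ℕ) : ℂ) + 1/2))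
            • (halfVar s (m + j) * (halfVar s (n + k) * halfPd s j (halfPd s k f))) := by
    intro j _
    rw [halfPd_sum, Finset.mul_sum, Finset.smul_sum, ← Finset.sum_add_distrib]
    refine Finset.sum_congr rfl fun k _ => ?_
    rw [halfPd_smul, halfPd_mul, halfPd_halfVar, smul_add (((k : ℕ) : ℂ) + 1/2),
      mul_add (halfVar s (m + j)), smul_add, mul_smul_comm, mul_smul_comm,
      smul_smul, smul_smul]
    rw [add_left_inj]
    rw [mul_left_comm]
  rw [Finset.sum_congr rfl step, Finset.sum_add_distrib]
  congr 1
  rw [Finset.sum_comm]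
  have step2 : ∀ k ∈ Finset.range (s - n),
      (∑ j ∈ Finset.range (s - m),
          ((((j : ℕ) : ℂ) + 1/2) * (((k : ℕ) : ℂ) + 1/2))
            • ((if n + k = j ∧ j < s then (1 : MvPolynomial (Fin s) ℂ) else 0)
                * (halfVar s (m + j) * halfPd s k f)))
      = if n + k ∈ Finset.range (s - m) then
          ((((n + k : ℕ) : ℂ) + 1/2) * (((k : ℕ) : ℂ) + 1/2))
            • (halfVar s (m + n + k) * halfPd s k f)
        else 0 := by
    intro k _
    rw [← Finset.sum_ite_eq' (Finset.range (s - m)) (n + k)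
      (fun j => ((((j : ℕ) : ℂ) + 1/2) * (((k : ℕ) : ℂ) + 1/2))
        • (halfVar s (m + n + k) * halfPd s k f))]
    refine Finset.sum_congr rfl fun j hj => ?_
    simp only [Finset.mem_range] at hj
    rcases eq_or_ne j (n + k) with rfl | hne
    · rw [if_pos ⟨rfl, by omega⟩, if_pos rfl, one_mul, ← Nat.add_assoc]
    · rw [if_neg (by omega), if_neg hne, zero_mul, smul_zero]
  rw [Finset.sum_congr rfl step2]
  refine (Finset.sum_subset ?_ ?_).symm.trans (Finset.sum_congr rfl ?_)
  · intro k hk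
    simp only [Finset.mem_range] at *
    omega
  · intro k hk hk'
    simp only [Finset.mem_range] at hk hk'
    rw [if_neg (by simp only [Finset.mem_range]; omega)]
  · intro k hk
    simp only [Finset.mem_range] at hk
    rw [if_pos (by simp only [Finset.mem_range]; omega)]

lemma keyB (s m n : ℕ) (f : MvPolynomial (Fin s) ℂ) :
    Dop s m (Dop s n f) - Dop s n (Dop s m f)
      = (((n : ℂ) - m)) • Dop s (m + n) f := by
  rw [expandB s m n f, expandB s n m f, Nat.add_comm n m]
  have hsym : ∑ j ∈ Finset.range (s - n), ∑ k ∈ Finset.range (s - m),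
        ((((j : ℕ) : ℂ) + 1/2) * (((k : ℕ) : ℂ) + 1/2))
          • (halfVar s (n + j) * (halfVar s (m + k) * halfPd s j (halfPd s k f)))
      = ∑ j ∈ Finset.range (s - m), ∑ k ∈ Finset.range (s - n),
        ((((j : ℕ) : ℂ) + 1/2) * (((k : ℕ) : ℂ) + 1/2))
          • (halfVar s (m + j) * (halfVar s (n + k) * halfPd s j (halfPd s k f))) := by
    rw [Finset.sum_comm]
    refine Finset.sum_congr rfl fun a _ => Finset.sum_congr rfl fun b _ => ?_
    rw [halfPd_comm, mul_comm (((b : ℕ) : ℂ) + 1/2), mul_left_comm]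
  rw [hsym, add_sub_add_right_eq_sub]
  unfold Dop
  rw [Finset.smul_sum, ← Finset.sum_sub_distrib]
  refine Finset.sum_congr rfl fun k _ => ?_
  rw [smul_smul, ← sub_smul]
  congr 1
  push_cast
  ring

/-- The operators `𝓛ₙ^{(s-1/2)}` realize an anti-homomorphism of the positive part of
the Virasoro (Witt) algebra: `[𝓛_m, 𝓛_n] = (n - m) 𝓛_{m+n}` for all `m, n ≥ 0`. -/
theorem halfVir_antihom (s : ℕ) (hs : 1 ≤ s) (m n : ℕ) (f : MvPolynomial (Fin s) ℂ) :
    halfVir s m (halfVir s n f) - halfVir s n (halfVir s m f)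
      = (((n : ℂ) - (m : ℂ))) • halfVir s (m + n) f := by
  simp only [halfVir_eq s hs]
  rw [Dop_add, Dop_add, Dop_mul, Dop_mul]
  have hA := keyA s m n
  have hB := keyB s m n f
  simp only [smul_eq_C_mul] at hA hB ⊢
  linear_combination f * hA + hB
end
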